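/- arXiv:1604.06513 — 3 statements merged into one kernel-verified Lean document; each statement's English description precedes it below -/
import Mathlib

section
/- Let m ≥ 2 and n ∈ {m, m+1}. Then every 2-coloring of the edges of K_{2m+n+2} contains a monochromatic copy of the bistar B(m,n); hence r(B(m,n)) ≤ 2m+n+2. -/
open SimpleGraph

/-- The graph of edges of color `b` in the 2-coloring `c` of a complete graph. -/
def colorGraph {V : Type*} (c : Sym2 V → Bool) (b : Bool) : SimpleGraph V :=
  SimpleGraph.fromRel (fun u v => c s(u, v) = b)

/-- `G` occurs as a (not nec. induced) subgraph of `H`. -/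
def ContainsCopy {V W : Type*} (G : SimpleGraph V) (H : SimpleGraph W) : Prop :=
  ∃ f : V → W, Function.Injective f ∧ ∀ ⦃u v : V⦄, G.Adj u v → H.Adj (f u) (f v)

/-- The coloring `c` contains a monochromatic copy of `G`. -/
def HasMonoCopy {V W : Type*} (G : SimpleGraph V) (c : Sym2 W → Bool) : Prop :=
  ∃ b : Bool, ContainsCopy G (colorGraph c b)

/-- The (diagonal) Ramsey number of a graph `G`. -/
noncomputable def ramseyNumber {V : Type*} (G : SimpleGraph V) : ℕ :=
  sInf {r : ℕ | ∀ c : Sym2 (Fin r) → Bool, HasMonoCopy G c}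

/-- The star `S n = K_{1,n}`: center `0`, `n` leaves. -/
def starGraph (n : ℕ) : SimpleGraph (Fin (n + 1)) :=
  SimpleGraph.fromRel (fun u v => u = 0)

/-- The bistar `B(m,n)`: adjacent centers `inl 0`, `inl 1`, with `m` resp. `n` leaves. -/
def bistar (m n : ℕ) : SimpleGraph (Fin 2 ⊕ Fin m ⊕ Fin n) :=
  SimpleGraph.fromRel (fun u v =>
    (u = Sum.inl 0 ∧ v = Sum.inl 1) ∨
    (u = Sum.inl 0 ∧ ∃ i, v = Sum.inr (Sum.inl i)) ∨
    (u = Sum.inl 1 ∧ ∃ j, v = Sum.inr (Sum.inr j)))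

/-! ### Auxiliary lemmas -/

lemma BRaux.bool_ne_iff {x y : Bool} : x ≠ y ↔ x = !y := by cases x <;> cases y <;> simp

lemma BRaux.select {W : Type*} [DecidableEq W] {A B : Finset W} {m n : ℕ}
    (hA : m ≤ A.card) (hB : n ≤ B.card) (hU : m + n ≤ (A ∪ B).card) :
    ∃ P Q : Finset W, P ⊆ A ∧ Q ⊆ B ∧ P.card = m ∧ Q.card = n ∧ Disjoint P Q := by
  rcases le_or_gt n (B \ A).card with h | h
  · obtain ⟨Q, hQsub, hQcard⟩ := Finset.exists_subset_card_eq h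
    obtain ⟨P, hPsub, hPcard⟩ := Finset.exists_subset_card_eq hA
    exact ⟨P, Q, hPsub, hQsub.trans Finset.sdiff_subset, hPcard, hQcard,
      Finset.disjoint_sdiff.mono hPsub hQsub⟩
  · obtain ⟨Q, hQsub1, hQsub2, hQcard⟩ :=
      Finset.exists_subsuperset_card_eq (Finset.sdiff_subset) h.le hB
    have h1 := Finset.card_inter_add_card_sdiff Q A
    have h2 := Finset.card_inter_add_card_sdiff A Q
    have h25 : (Q ∩ A).card = (A ∩ Q).card := by rw [Finset.inter_comm]
    have h3 : (B \ A).card ≤ (Q \ A).card :=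
      Finset.card_le_card (fun x hx => Finset.mem_sdiff.mpr
        ⟨hQsub1 hx, (Finset.mem_sdiff.mp hx).2⟩)
    have h4 : (B \ A).card + A.card = (B ∪ A).card := Finset.card_sdiff_add_card B A
    have h5 : (B ∪ A).card = (A ∪ B).card := by rw [Finset.union_comm]
    have h6 : m ≤ (A \ Q).card := by omega
    obtain ⟨P, hPsub, hPcard⟩ := Finset.exists_subset_card_eq h6
    exact ⟨P, Q, hPsub.trans Finset.sdiff_subset, hQsub2, hPcard, hQcard,
      Finset.sdiff_disjoint.mono hPsub (Finset.Subset.refl Q)⟩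

lemma BRaux.fin2_cases : ∀ i : Fin 2, i = 0 ∨ i = 1 := by decide

lemma BRaux.embed {W : Type*} [DecidableEq W] (c : Sym2 W → Bool) (b : Bool) {m n : ℕ}
    {v₀ v₁ : W} (hne : v₀ ≠ v₁) (hc : c s(v₀, v₁) = b) {P Q : Finset W}
    (hPcard : P.card = m) (hQcard : Q.card = n) (hPQ : Disjoint P Q)
    (hP0 : v₀ ∉ P) (hP1 : v₁ ∉ P) (hQ0 : v₀ ∉ Q) (hQ1 : v₁ ∉ Q)
    (hPadj : ∀ w ∈ P, c s(v₀, w) = b) (hQadj : ∀ w ∈ Q, c s(v₁, w) = b) :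
    ContainsCopy (bistar m n) (colorGraph c b) := by
  classical
  set fP : Fin m → W := fun i => (((P.equivFinOfCardEq hPcard).symm) i : W) with hfPdef
  set fQ : Fin n → W := fun j => (((Q.equivFinOfCardEq hQcard).symm) j : W) with hfQdef
  have hPmem : ∀ i, fP i ∈ P := fun i => (((P.equivFinOfCardEq hPcard).symm) i).2
  have hQmem : ∀ j, fQ j ∈ Q := fun j => (((Q.equivFinOfCardEq hQcard).symm) j).2
  have hPinj : Function.Injective fP := fun i j h => by
    simpa using (P.equivFinOfCardEq hPcard).symm.injective (Subtype.ext h)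
  have hQinj : Function.Injective fQ := fun i j h => by
    simpa using (Q.equivFinOfCardEq hQcard).symm.injective (Subtype.ext h)
  have hPQne : ∀ i j, fP i ≠ fQ j := fun i j h =>
    (Finset.disjoint_left.mp hPQ (hPmem i)) (h ▸ hQmem j)
  set f : (Fin 2 ⊕ Fin m ⊕ Fin n) → W := fun x =>
    match x with
    | Sum.inl i => if i = 0 then v₀ else v₁
    | Sum.inr (Sum.inl i) => fP i
    | Sum.inr (Sum.inr j) => fQ j
    with hfdef
  have hf0 : f (Sum.inl 0) = v₀ := rfl
  have hf1 : f (Sum.inl 1) = v₁ := rfl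
  have hfP : ∀ i, f (Sum.inr (Sum.inl i)) = fP i := fun _ => rfl
  have hfQ : ∀ j, f (Sum.inr (Sum.inr j)) = fQ j := fun _ => rfl
  have hnotP : ∀ i : Fin 2, f (Sum.inl i) ∉ P := by
    intro i; rcases BRaux.fin2_cases i with rfl | rfl
    · rw [hf0]; exact hP0
    · rw [hf1]; exact hP1
  have hnotQ : ∀ i : Fin 2, f (Sum.inl i) ∉ Q := by
    intro i; rcases BRaux.fin2_cases i with rfl | rfl
    · rw [hf0]; exact hQ0
    · rw [hf1]; exact hQ1
  have hinj : Function.Injective f := by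
    intro x y hxy
    rcases x with i | (i | i) <;> rcases y with j | (j | j)
    · rcases BRaux.fin2_cases i with rfl | rfl <;> rcases BRaux.fin2_cases j with rfl | rfl
      · rfl
      · rw [hf0, hf1] at hxy; exact absurd hxy hne
      · rw [hf0, hf1] at hxy; exact absurd hxy.symm hne
      · rfl
    · exact absurd (by rw [hxy, hfP j]; exact hPmem j) (hnotP i)
    · exact absurd (by rw [hxy, hfQ j]; exact hQmem j) (hnotQ i)
    · exact absurd (by rw [← hxy, hfP i]; exact hPmem i) (hnotP j)
    · have h2 : fP i = fP j := by rw [← hfP i, ← hfP j]; exact hxy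
      rw [hPinj h2]
    · have h2 : fP i = fQ j := by rw [← hfP i, ← hfQ j]; exact hxy
      exact absurd h2 (hPQne i j)
    · exact absurd (by rw [← hxy, hfQ i]; exact hQmem i) (hnotQ j)
    · have h2 : fP j = fQ i := by rw [← hfP j, ← hfQ i]; exact hxy.symm
      exact absurd h2 (hPQne j i)
    · have h2 : fQ i = fQ j := by rw [← hfQ i, ← hfQ j]; exact hxy
      rw [hQinj h2]
  refine ⟨f, hinj, ?_⟩
  intro x y hadj
  rw [bistar, SimpleGraph.fromRel_adj] at hadj
  obtain ⟨hxy, hrel⟩ := hadj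
  have hcol : c s(f x, f y) = b ∨ c s(f y, f x) = b := by
    rcases hrel with (⟨hx, hy⟩ | ⟨hx, i, hy⟩ | ⟨hx, j, hy⟩) |
      (⟨hy, hx⟩ | ⟨hy, i, hx⟩ | ⟨hy, j, hx⟩) <;> subst hx <;> subst hy
    · left; rw [hf0, hf1]; exact hc
    · left; rw [hf0, hfP i]; exact hPadj _ (hPmem i)
    · left; rw [hf1, hfQ j]; exact hQadj _ (hQmem j)
    · right; rw [hf0, hf1]; exact hc
    · right; rw [hf0, hfP i]; exact hPadj _ (hPmem i)
    · right; rw [hf1, hfQ j]; exact hQadj _ (hQmem j)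
  rw [colorGraph, SimpleGraph.fromRel_adj]
  exact ⟨fun h => hxy (hinj h), hcol⟩

section Aux
variable {V : Type*} [Fintype V] [DecidableEq V]

/-- The `b`-colored neighborhood of `u`. -/
def BRaux.nbr (c : Sym2 V → Bool) (b : Bool) (u : V) : Finset V :=
  Finset.univ.filter (fun w => w ≠ u ∧ c s(u, w) = b)

/-- The set of common non-`b`-neighbors of `u` and `v`. -/
def BRaux.dset (c : Sym2 V → Bool) (b : Bool) (u v : V) : Finset V :=
  Finset.univ.filter (fun w => w ≠ u ∧ w ≠ v ∧ c s(u, w) ≠ b ∧ c s(v, w) ≠ b)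

open BRaux

lemma BRaux.nbr_card_add (c : Sym2 V → Bool) (b : Bool) (u : V) :
    (nbr c b u).card + (nbr c (!b) u).card = Fintype.card V - 1 := by
  have h1 : nbr c b u = (Finset.univ.erase u).filter (fun w => c s(u,w) = b) := by
    ext w; simp [nbr, Finset.mem_erase, and_comm]
  have h2 : nbr c (!b) u = (Finset.univ.erase u).filter (fun w => ¬ (c s(u,w) = b)) := by
    ext w
    simp only [nbr, Finset.mem_filter, Finset.mem_erase, Finset.mem_univ, true_and]
    rw [← BRaux.bool_ne_iff]
    tauto
  rw [h1, h2, Finset.card_filter_add_card_filter_not,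
    Finset.card_erase_of_mem (Finset.mem_univ u), Finset.card_univ]

lemma BRaux.goodEdge_cards (c : Sym2 V → Bool) (b : Bool) {u v : V} (huv : u ≠ v)
    (hc : c s(u, v) = b) :
    (Finset.univ.filter (fun w => w ≠ u ∧ w ≠ v ∧ c s(v, w) = b)).card + 1 = (nbr c b v).card ∧
    (Finset.univ.filter (fun w => w ≠ u ∧ w ≠ v ∧ c s(u, w) = b)).card + 1 = (nbr c b u).card ∧
    ((Finset.univ.filter (fun w => w ≠ u ∧ w ≠ v ∧ c s(v, w) = b)) ∪
      (Finset.univ.filter (fun w => w ≠ u ∧ w ≠ v ∧ c s(u, w) = b))).card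
      + (dset c b u v).card + 2 = Fintype.card V := by
  have hA : Finset.univ.filter (fun w => w ≠ u ∧ w ≠ v ∧ c s(v, w) = b)
      = (nbr c b v).erase u := by
    ext w; simp only [Finset.mem_filter, Finset.mem_erase, Finset.mem_univ, true_and, nbr]
    try tauto
  have hB : Finset.univ.filter (fun w => w ≠ u ∧ w ≠ v ∧ c s(u, w) = b)
      = (nbr c b u).erase v := by
    ext w; simp only [Finset.mem_filter, Finset.mem_erase, Finset.mem_univ, true_and, nbr]
    try tauto
  have huA : u ∈ nbr c b v := by
    simp only [nbr, Finset.mem_filter, Finset.mem_univ, true_and]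
    exact ⟨huv, by rwa [Sym2.eq_swap]⟩
  have hvB : v ∈ nbr c b u := by
    simp only [nbr, Finset.mem_filter, Finset.mem_univ, true_and]
    exact ⟨huv.symm, hc⟩
  have c1 : ((nbr c b v).erase u).card + 1 = (nbr c b v).card := by
    rw [Finset.card_erase_of_mem huA]
    have := Finset.card_pos.mpr ⟨u, huA⟩; omega
  have c2 : ((nbr c b u).erase v).card + 1 = (nbr c b u).card := by
    rw [Finset.card_erase_of_mem hvB]
    have := Finset.card_pos.mpr ⟨v, hvB⟩; omega
  refine ⟨by rw [hA]; exact c1, by rw [hB]; exact c2, ?_⟩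
  set O : Finset V := (Finset.univ.erase u).erase v with hO
  have hOcard : O.card + 2 = Fintype.card V := by
    rw [hO, Finset.card_erase_of_mem, Finset.card_erase_of_mem (Finset.mem_univ u),
      Finset.card_univ]
    · have : 2 ≤ Fintype.card V := Fintype.one_lt_card_iff_nontrivial.mpr ⟨⟨u, v, huv⟩⟩
      omega
    · exact Finset.mem_erase.mpr ⟨huv.symm, Finset.mem_univ v⟩
  have hsplit := Finset.card_filter_add_card_filter_not
    (s := O) (p := fun w => c s(v, w) = b ∨ c s(u, w) = b)
  have hU : O.filter (fun w => c s(v, w) = b ∨ c s(u, w) = b) =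
      (Finset.univ.filter (fun w => w ≠ u ∧ w ≠ v ∧ c s(v, w) = b)) ∪
      (Finset.univ.filter (fun w => w ≠ u ∧ w ≠ v ∧ c s(u, w) = b)) := by
    ext w
    simp only [Finset.mem_filter, Finset.mem_union, Finset.mem_erase, Finset.mem_univ,
      true_and, hO]
    tauto
  have hD : O.filter (fun w => ¬ (c s(v, w) = b ∨ c s(u, w) = b)) = dset c b u v := by
    ext w
    simp only [dset, Finset.mem_filter, Finset.mem_erase, Finset.mem_univ, true_and, hO]
    push_neg
    tauto
  rw [hU, hD] at hsplit
  omega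

lemma BRaux.goodEdge {m n : ℕ} (hcard : Fintype.card V = 2*m+n+2)
    (c : Sym2 V → Bool) {b : Bool} {u v : V} (huv : u ≠ v) (hc : c s(u,v) = b)
    (hdu : n+1 ≤ (nbr c b u).card) (hdv : m+1 ≤ (nbr c b v).card)
    (hD : (dset c b u v).card ≤ m) : HasMonoCopy (bistar m n) c := by
  obtain ⟨c1, c2, c3⟩ := BRaux.goodEdge_cards c b huv hc
  set A := Finset.univ.filter (fun w => w ≠ u ∧ w ≠ v ∧ c s(v, w) = b) with hAdef
  set B := Finset.univ.filter (fun w => w ≠ u ∧ w ≠ v ∧ c s(u, w) = b) with hBdef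
  have hA : m ≤ A.card := by omega
  have hB : n ≤ B.card := by omega
  have hU : m + n ≤ (A ∪ B).card := by omega
  obtain ⟨P, Q, hPA, hQB, hPc, hQc, hdis⟩ := BRaux.select hA hB hU
  have hmemA : ∀ w ∈ A, w ≠ u ∧ w ≠ v ∧ c s(v, w) = b := by
    intro w hw; simpa [hAdef] using hw
  have hmemB : ∀ w ∈ B, w ≠ u ∧ w ≠ v ∧ c s(u, w) = b := by
    intro w hw; simpa [hBdef] using hw
  refine ⟨b, BRaux.embed c b (v₀ := v) (v₁ := u) huv.symm (by rwa [Sym2.eq_swap]) hPc hQc hdis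
    (fun h => (hmemA _ (hPA h)).2.1 rfl) (fun h => (hmemA _ (hPA h)).1 rfl)
    (fun h => (hmemB _ (hQB h)).2.1 rfl) (fun h => (hmemB _ (hQB h)).1 rfl)
    (fun w hw => (hmemA _ (hPA hw)).2.2) (fun w hw => (hmemB _ (hQB hw)).2.2)⟩

end Aux

section Main
variable {V : Type*} [Fintype V] [DecidableEq V]
open BRaux Finset

lemma BRaux.main (m n : ℕ) (hm : 2 ≤ m) (hn : n = m ∨ n = m + 1)
    (hcard : Fintype.card V = 2 * m + n + 2) (c : Sym2 V → Bool) :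
    HasMonoCopy (bistar m n) c := by
  by_contra hno
  -- every "good" edge must have a large common non-neighborhood
  have hfail : ∀ (b : Bool) (u v : V), u ≠ v → c s(u,v) = b →
      n+1 ≤ (nbr c b u).card → m+1 ≤ (nbr c b v).card →
      m+1 ≤ (dset c b u v).card := by
    intro b u v h1 h2 h3 h4
    by_contra h5
    push_neg at h5
    exact hno (BRaux.goodEdge (by omega) c h1 h2 h3 h4 (by omega))
  have hsum : ∀ (b : Bool) (u : V),
      (nbr c b u).card + (nbr c (!b) u).card = 2*m+n+1 := by
    intro b u
    have := BRaux.nbr_card_add c b u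
    omega
  have hmemnbr : ∀ (b : Bool) (u w : V), w ∈ nbr c b u ↔ (w ≠ u ∧ c s(u,w) = b) := by
    intro b u w; simp [nbr]
  -- dset is inside the opposite neighborhood of u
  have hdsub : ∀ (b : Bool) (u v : V), dset c b u v ⊆ nbr c (!b) u := by
    intro b u v w hw
    simp only [dset, Finset.mem_filter, Finset.mem_univ, true_and] at hw
    rw [hmemnbr]
    exact ⟨hw.1, BRaux.bool_ne_iff.mp hw.2.2.1⟩
  -- Step 1: from a big vertex, all its neighbors are big in the other color
  have hbigstep : ∀ (b : Bool) (u : V), m+n+1 ≤ (nbr c b u).card →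
      ∀ v ∈ nbr c b u, m+n+1 ≤ (nbr c (!b) v).card := by
    intro b u hu v hv
    by_contra h
    push_neg at h
    have hsv := hsum b v
    have hdv : m+1 ≤ (nbr c b v).card := by
      have hb : (nbr c (!b) v).card ≤ m+n := by omega
      omega
    rw [hmemnbr] at hv
    have hD := hfail b u v hv.1.symm hv.2 (le_trans (by omega) hu) hdv
    have hle := Finset.card_le_card (hdsub b u v)
    have hsu := hsum b u
    omega
  -- Step 2: no vertex is big
  have hnobig : ∀ (b : Bool) (u : V), (nbr c b u).card ≤ m + n := by
    by_contra h
    push_neg at h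
    obtain ⟨b, u, hu⟩ := h
    have hu' : m+n+1 ≤ (nbr c b u).card := hu
    obtain ⟨v, hv⟩ := Finset.card_pos.mp (by omega : 0 < (nbr c b u).card)
    have hvbig := hbigstep b u hu' v hv
    set Bigb := Finset.univ.filter (fun x => m+n+1 ≤ (nbr c b x).card) with hBigb
    set Bignb := Finset.univ.filter (fun x => m+n+1 ≤ (nbr c (!b) x).card) with hBignb
    have h1 : nbr c b u ⊆ Bignb := by
      intro w hw
      simp only [hBignb, Finset.mem_filter, Finset.mem_univ, true_and]
      exact hbigstep b u hu' w hw
    have h2 : nbr c (!b) v ⊆ Bigb := by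
      intro w hw
      simp only [hBigb, Finset.mem_filter, Finset.mem_univ, true_and]
      have := hbigstep (!b) v hvbig w hw
      rwa [Bool.not_not] at this
    have hdisj : Disjoint Bigb Bignb := by
      rw [Finset.disjoint_left]
      intro x hx hx'
      simp only [hBigb, Finset.mem_filter, Finset.mem_univ, true_and] at hx
      simp only [hBignb, Finset.mem_filter, Finset.mem_univ, true_and] at hx'
      have := hsum b x
      omega
    have hcards : Bigb.card + Bignb.card ≤ Fintype.card V := by
      rw [← Finset.card_union_of_disjoint hdisj]
      exact (Finset.card_le_univ _).trans_eq Finset.card_univ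
    have hc1 : m+n+1 ≤ Bignb.card := le_trans hu' (Finset.card_le_card h1)
    have hc2 : m+n+1 ≤ Bigb.card := le_trans hvbig (Finset.card_le_card h2)
    omega
  have hge : ∀ (b : Bool) (u : V), m+1 ≤ (nbr c b u).card := by
    intro b u
    have := hsum b u
    have := hnobig (!b) u
    omega
  -- Step 3: no vertex has degree exactly m+1
  have hnosmall : ∀ (b : Bool) (u : V), (nbr c b u).card ≠ m+1 := by
    intro b u heq
    have hR : (nbr c (!b) u).card = m+n := by have := hsum b u; omega
    have hkey : ∀ v ∈ nbr c (!b) u, ∀ w ∈ nbr c b u, c s(v, w) = b ∧ w ≠ v := by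
      intro v hv w hw
      rw [hmemnbr] at hv
      have hD := hfail (!b) u v hv.1.symm hv.2 (by omega) (hge (!b) v)
      have hDsub : dset c (!b) u v ⊆ nbr c b u := by
        intro x hx
        have := hdsub (!b) u v hx
        rwa [Bool.not_not] at this
      have hDeq : dset c (!b) u v = nbr c b u :=
        Finset.eq_of_subset_of_card_le hDsub (by omega)
      rw [← hDeq] at hw
      simp only [dset, Finset.mem_filter, Finset.mem_univ, true_and] at hw
      refine ⟨?_, hw.2.1⟩
      have h3 := BRaux.bool_ne_iff.mp hw.2.2.2
      rwa [Bool.not_not] at h3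
    obtain ⟨w, hw⟩ := Finset.card_pos.mp (by omega : 0 < (nbr c b u).card)
    have hsubw : insert u (nbr c (!b) u) ⊆ nbr c b w := by
      intro x hx
      rcases Finset.mem_insert.mp hx with rfl | hx
      · rw [hmemnbr]
        rw [hmemnbr] at hw
        exact ⟨hw.1.symm, by rw [Sym2.eq_swap]; exact hw.2⟩
      · obtain ⟨hcol, hne⟩ := hkey x hx w hw
        rw [hmemnbr]
        exact ⟨hne.symm, by rw [Sym2.eq_swap]; exact hcol⟩
    have hucard : (insert u (nbr c (!b) u)).card = m+n+1 := by
      rw [Finset.card_insert_of_notMem, hR]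
      intro hx
      exact ((hmemnbr (!b) u u).mp hx).1 rfl
    have := Finset.card_le_card hsubw
    have := hnobig b w
    omega
  -- Step 4: double counting
  obtain ⟨u⟩ : Nonempty V := Fintype.card_pos_iff.mp (by omega)
  have hr : m+2 ≤ (nbr c true u).card := by
    have := hge true u; have := hnosmall true u; omega
  have hb : m+2 ≤ (nbr c false u).card := by
    have := hge false u; have := hnosmall false u; omega
  have hrb : (nbr c true u).card + (nbr c false u).card = 2*m+n+1 := by
    have := hsum true u; simpa using this
  set NR := nbr c true u with hNR
  set NB := nbr c false u with hNB
  have key1 : ∀ w ∈ NB, m+1 ≤ (NR.filter (fun x => c s(w,x) = true ∧ x ≠ w)).card := by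
    intro w hw
    rw [hNB, hmemnbr] at hw
    have hD := hfail false u w hw.1.symm hw.2 (by rw [← hNB]; omega) (hge false w)
    refine le_trans hD (Finset.card_le_card ?_)
    intro x hx
    simp only [dset, Finset.mem_filter, Finset.mem_univ, true_and] at hx
    simp only [Finset.mem_filter, hNR, hmemnbr]
    refine ⟨⟨hx.1, ?_⟩, ?_, hx.2.1⟩
    · simpa using BRaux.bool_ne_iff.mp hx.2.2.1
    · simpa using BRaux.bool_ne_iff.mp hx.2.2.2
  have key2 : ∀ x ∈ NR, m+1 ≤ (NB.filter (fun y => c s(x,y) = false ∧ y ≠ x)).card := by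
    intro x hx
    rw [hNR, hmemnbr] at hx
    have hD := hfail true u x hx.1.symm hx.2 (by rw [← hNR]; omega) (hge true x)
    refine le_trans hD (Finset.card_le_card ?_)
    intro y hy
    simp only [dset, Finset.mem_filter, Finset.mem_univ, true_and] at hy
    simp only [Finset.mem_filter, hNB, hmemnbr]
    refine ⟨⟨hy.1, ?_⟩, ?_, hy.2.1⟩
    · simpa using BRaux.bool_ne_iff.mp hy.2.2.1
    · simpa using BRaux.bool_ne_iff.mp hy.2.2.2
  -- sum bounds
  have hsum1 : (m+1) * NB.card ≤
      ∑ w ∈ NB, (NR.filter (fun x => c s(w,x) = true ∧ x ≠ w)).card := by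
    rw [mul_comm]
    calc NB.card * (m+1) = ∑ _w ∈ NB, (m+1) := by rw [Finset.sum_const, smul_eq_mul]
    _ ≤ _ := Finset.sum_le_sum key1
  have hsum2 : (m+1) * NR.card ≤
      ∑ x ∈ NR, (NB.filter (fun y => c s(x,y) = false ∧ y ≠ x)).card := by
    rw [mul_comm]
    calc NR.card * (m+1) = ∑ _x ∈ NR, (m+1) := by rw [Finset.sum_const, smul_eq_mul]
    _ ≤ _ := Finset.sum_le_sum key2
  have hdouble : (∑ w ∈ NB, (NR.filter (fun x => c s(w,x) = true ∧ x ≠ w)).card) +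
      (∑ x ∈ NR, (NB.filter (fun y => c s(x,y) = false ∧ y ≠ x)).card) ≤
      NB.card * NR.card := by
    have e1 : ∀ w, (NR.filter (fun x => c s(w,x) = true ∧ x ≠ w)).card =
        ∑ x ∈ NR, (if c s(w,x) = true ∧ x ≠ w then 1 else 0) := by
      intro w; rw [Finset.card_filter]
    have e2 : ∀ x, (NB.filter (fun y => c s(x,y) = false ∧ y ≠ x)).card =
        ∑ w ∈ NB, (if c s(x,w) = false ∧ w ≠ x then 1 else 0) := by
      intro x; rw [Finset.card_filter]
    simp only [e1, e2]
    rw [Finset.sum_comm (s := NR) (t := NB)]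
    have hpt : ∀ w ∈ NB, ((∑ x ∈ NR, if c s(w,x) = true ∧ x ≠ w then 1 else 0) +
        ∑ x ∈ NR, if c s(x,w) = false ∧ w ≠ x then 1 else 0) ≤ NR.card := by
      intro w _
      rw [← Finset.sum_add_distrib]
      calc ∑ x ∈ NR, ((if c s(w,x) = true ∧ x ≠ w then 1 else 0) +
            (if c s(x,w) = false ∧ w ≠ x then 1 else 0))
          ≤ ∑ _x ∈ NR, 1 := by
            refine Finset.sum_le_sum (fun x _ => ?_)
            split_ifs with h1 h2
            · exfalso
              have h3 := h2.1
              rw [Sym2.eq_swap, h1.1] at h3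
              exact Bool.noConfusion h3
            · omega
            · omega
            · omega
        _ = NR.card := by simp
    rw [← Finset.sum_add_distrib]
    calc ∑ w ∈ NB, ((∑ x ∈ NR, if c s(w,x) = true ∧ x ≠ w then 1 else 0) +
          ∑ x ∈ NR, if c s(x,w) = false ∧ w ≠ x then 1 else 0)
        ≤ ∑ _w ∈ NB, NR.card := Finset.sum_le_sum hpt
      _ = NB.card * NR.card := by rw [Finset.sum_const, smul_eq_mul]
  have hfinal : (m+1) * (NR.card + NB.card) ≤ NR.card * NB.card := by
    rw [mul_add]
    calc (m+1) * NR.card + (m+1) * NB.card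
        ≤ (∑ x ∈ NR, (NB.filter (fun y => c s(x,y) = false ∧ y ≠ x)).card) +
          (∑ w ∈ NB, (NR.filter (fun x => c s(w,x) = true ∧ x ≠ w)).card) :=
          Nat.add_le_add hsum2 hsum1
      _ ≤ NB.card * NR.card := by rw [Nat.add_comm]; exact hdouble
      _ = NR.card * NB.card := Nat.mul_comm _ _
  -- AM-GM contradiction
  set r := NR.card
  set s := NB.card
  have hamgm : 4 * (r * s) ≤ (r + s) * (r + s) := by
    have hsq : 2 * r * s ≤ r ^ 2 + s ^ 2 := two_mul_le_add_sq r s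
    have hexp : (r + s) * (r + s) = r ^ 2 + 2 * r * s + s ^ 2 := by ring
    linarith
  have h4 : 4 * ((m+1) * (r+s)) ≤ (r+s) * (r+s) :=
    le_trans (Nat.mul_le_mul_left 4 hfinal) hamgm
  have hpos : 0 < r + s := by omega
  have h5 : 4 * (m+1) ≤ r + s := by
    have := Nat.le_of_mul_le_mul_right (a := 4*(m+1)) (b := r+s) (by
      calc 4*(m+1) * (r+s) = 4 * ((m+1)*(r+s)) := by ring
      _ ≤ (r+s)*(r+s) := h4) hpos
    exact this
  omega

end Main

theorem bistar_ramsey_upper_small_n (m n : ℕ) (hm : 2 ≤ m)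
    (hn : n = m ∨ n = m + 1) :
    (∀ c : Sym2 (Fin (2 * m + n + 2)) → Bool, HasMonoCopy (bistar m n) c) ∧
    ramseyNumber (bistar m n) ≤ 2 * m + n + 2 := by
  have h1 : ∀ c : Sym2 (Fin (2 * m + n + 2)) → Bool, HasMonoCopy (bistar m n) c :=
    fun c => BRaux.main m n hm hn (by simp) c
  exact ⟨h1, Nat.sInf_le h1⟩
end

section
/- For m ≥ 2 and n ∈ {m, m+1}, r(B(m,n)) = 2m + n + 2. -/
open SimpleGraph

namespace BistarAux

open Finset

lemma colorGraph_adj {V : Type*} (c : Sym2 V → Bool) (b : Bool) (u v : V) :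
    (colorGraph c b).Adj u v ↔ u ≠ v ∧ c s(u, v) = b := by
  unfold colorGraph
  rw [SimpleGraph.fromRel_adj]
  constructor
  · rintro ⟨hne, h | h⟩
    · exact ⟨hne, h⟩
    · exact ⟨hne, by rwa [Sym2.eq_swap]⟩
  · rintro ⟨hne, h⟩
    exact ⟨hne, Or.inl h⟩

variable {V : Type*} [Fintype V] [DecidableEq V]

def nb (c : Sym2 V → Bool) (b : Bool) (u : V) : Finset V :=
  univ.filter (fun v => v ≠ u ∧ c s(u, v) = b)

lemma mem_nb {c : Sym2 V → Bool} {b : Bool} {u v : V} :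
    v ∈ nb c b u ↔ v ≠ u ∧ c s(u, v) = b := by simp [nb]

lemma nb_comm {c : Sym2 V → Bool} {b : Bool} {u v : V} :
    v ∈ nb c b u ↔ u ∈ nb c b v := by
  rw [mem_nb, mem_nb, Sym2.eq_swap]
  exact and_congr_left' ⟨Ne.symm, Ne.symm⟩

lemma notMem_nb_self {c : Sym2 V → Bool} {b : Bool} {u : V} : u ∉ nb c b u := by
  simp [nb]

def deg (c : Sym2 V → Bool) (b : Bool) (u : V) : ℕ := (nb c b u).card

lemma deg_add (c : Sym2 V → Bool) (b : Bool) (u : V) :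
    deg c b u + deg c (!b) u = Fintype.card V - 1 := by
  have h1 : nb c b u ∪ nb c (!b) u = univ.erase u := by
    ext v
    simp only [nb, mem_union, mem_filter, mem_univ, true_and, mem_erase]
    rcases Bool.eq_false_or_eq_true (c s(u, v)) with h | h <;> cases b <;> simp [h]
  have h2 : Disjoint (nb c b u) (nb c (!b) u) := by
    rw [Finset.disjoint_left]
    intro v hv hv'
    rw [mem_nb] at hv hv'
    cases b <;> simp_all
  have := Finset.card_union_of_disjoint h2
  rw [h1, Finset.card_erase_of_mem (mem_univ u)] at this
  simpa [deg, Finset.card_univ] using this.symm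

variable {α : Type*} [DecidableEq α] in
lemma sel {m n : ℕ} {S T : Finset α} (hS : m ≤ S.card) (hT : n ≤ T.card)
    (hU : m + n ≤ (S ∪ T).card) :
    ∃ A B : Finset α, A ⊆ S ∧ B ⊆ T ∧ Disjoint A B ∧ A.card = m ∧ B.card = n := by
  obtain ⟨A', hA'sub, hA'card⟩ := Finset.exists_subset_card_eq
    (s := S \ T) (n := min m (S \ T).card) (min_le_right _ _)
  obtain ⟨A, hA'A, hAS, hAcard⟩ := Finset.exists_subsuperset_card_eq
    (hA'sub.trans Finset.sdiff_subset)
    (le_trans (le_of_eq hA'card) (min_le_left _ _)) hS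
  have hTA : n ≤ (T \ A).card := by
    rcases le_or_gt m ((S \ T).card) with h | h
    · -- A = A' ⊆ S \ T, so T ∩ A = ∅
      have hAA' : A' = A := Finset.eq_of_subset_of_card_le hA'A
        (by rw [hAcard, hA'card]; exact le_min le_rfl h)
      have hdis : Disjoint T A := by
        rw [← hAA']
        exact Finset.disjoint_sdiff.mono_right hA'sub
      rwa [Finset.sdiff_eq_self_of_disjoint hdis]
    · -- S \ T ⊆ A
      have hmin : A'.card = (S \ T).card := by rw [hA'card]; omega
      have hA'eq : A' = S \ T := Finset.eq_of_subset_of_card_le hA'sub (le_of_eq hmin.symm)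
      have hST_A : S \ T ⊆ A := hA'eq ▸ hA'A
      have h1 : (T ∩ A).card ≤ (A \ (S \ T)).card := by
        apply Finset.card_le_card
        intro x hx
        rw [Finset.mem_inter] at hx
        rw [Finset.mem_sdiff]
        exact ⟨hx.2, fun hc => (Finset.mem_sdiff.mp hc).2 hx.1⟩
      have h2 : (A \ (S \ T)).card = A.card - (S \ T).card :=
        Finset.card_sdiff_of_subset hST_A
      have h3 : (T \ A).card + (T ∩ A).card = T.card := Finset.card_sdiff_add_card_inter T A
      have h4 : (S \ T).card + T.card = (S ∪ T).card := Finset.card_sdiff_add_card S T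
      omega
  obtain ⟨B, hBsub, hBcard⟩ := Finset.exists_subset_card_eq hTA
  exact ⟨A, B, hAS, hBsub.trans Finset.sdiff_subset,
    Finset.disjoint_sdiff.mono_right hBsub, hAcard, hBcard⟩


variable {V : Type*} [Fintype V] [DecidableEq V]

lemma partition_lemma (c : Sym2 V → Bool) (b : Bool) {u v : V} (hne : u ≠ v)
    (he : c s(u, v) = b) :
    ((nb c b u ∪ nb c b v) \ {u, v}).card + (nb c (!b) u ∩ nb c (!b) v).card =
      Fintype.card V - 2 := by
  have hU : ((nb c b u ∪ nb c b v) \ {u, v}) ∪ (nb c (!b) u ∩ nb c (!b) v) =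
      univ \ {u, v} := by
    ext w
    simp only [mem_union, mem_sdiff, mem_inter, mem_insert, mem_singleton, mem_nb,
      mem_univ, true_and]
    constructor
    · rintro (⟨_, hw⟩ | ⟨⟨hwu, h1⟩, ⟨hwv, h2⟩⟩)
      · exact hw
      · rintro (rfl | rfl)
        · exact hwu rfl
        · exact hwv rfl
    · intro hw
      have hwu : w ≠ u := fun h => hw (Or.inl h)
      have hwv : w ≠ v := fun h => hw (Or.inr h)
      by_cases hcu : c s(u, w) = b
      · exact Or.inl ⟨Or.inl ⟨hwu, hcu⟩, hw⟩
      by_cases hcv : c s(v, w) = b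
      · exact Or.inl ⟨Or.inr ⟨hwv, hcv⟩, hw⟩
      · refine Or.inr ⟨⟨hwu, ?_⟩, ⟨hwv, ?_⟩⟩ <;>
          (cases b <;> [skip; skip] <;> simp_all)
  have hD : Disjoint ((nb c b u ∪ nb c b v) \ {u, v}) (nb c (!b) u ∩ nb c (!b) v) := by
    rw [Finset.disjoint_left]
    intro w hw1 hw2
    rw [mem_sdiff, mem_union, mem_nb, mem_nb] at hw1
    rw [mem_inter, mem_nb, mem_nb] at hw2
    rcases hw1.1 with h | h
    · have := h.2; have := hw2.1.2; cases b <;> simp_all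
    · have := h.2; have := hw2.2.2; cases b <;> simp_all
  have := Finset.card_union_of_disjoint hD
  rw [hU] at this
  have hcard2 : ({u, v} : Finset V).card = 2 := by
    rw [Finset.card_insert_of_notMem (by simp [hne]), Finset.card_singleton]
  rw [← this, Finset.card_sdiff_of_subset (Finset.subset_univ _), Finset.card_univ, hcard2]

lemma copy_lemma (m n : ℕ) (c : Sym2 V → Bool) (b : Bool) {u v : V}
    (hne : u ≠ v) (he : c s(u, v) = b)
    (hu : m + 1 ≤ deg c b u) (hv : n + 1 ≤ deg c b v)
    (hcard : m + n ≤ ((nb c b u ∪ nb c b v) \ {u, v}).card) :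
    ContainsCopy (bistar m n) (colorGraph c b) := by
  classical
  set S : Finset V := nb c b u \ {u, v} with hSdef
  set T : Finset V := nb c b v \ {u, v} with hTdef
  have hvu : v ∈ nb c b u := mem_nb.mpr ⟨hne.symm, he⟩
  have huv : u ∈ nb c b v := nb_comm.mp hvu
  have hScard : m ≤ S.card := by
    have hSeq : S = (nb c b u).erase v := by
      ext w
      simp only [hSdef, mem_sdiff, mem_insert, mem_singleton, mem_erase]
      constructor
      · rintro ⟨hw, hw2⟩; exact ⟨fun h => hw2 (Or.inr h), hw⟩
      · rintro ⟨hw2, hw⟩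
        exact ⟨hw, by rintro (rfl | rfl); exact (mem_nb.mp hw).1 rfl; exact hw2 rfl⟩
    rw [hSeq, Finset.card_erase_of_mem hvu]
    have := hu; unfold deg at this; omega
  have hTcard : n ≤ T.card := by
    have hTeq : T = (nb c b v).erase u := by
      ext w
      simp only [hTdef, mem_sdiff, mem_insert, mem_singleton, mem_erase]
      constructor
      · rintro ⟨hw, hw2⟩; exact ⟨fun h => hw2 (Or.inl h), hw⟩
      · rintro ⟨hw2, hw⟩
        exact ⟨hw, by rintro (rfl | rfl); exact hw2 rfl; exact (mem_nb.mp hw).1 rfl⟩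
    rw [hTeq, Finset.card_erase_of_mem huv]
    have := hv; unfold deg at this; omega
  have hUcard : m + n ≤ (S ∪ T).card := by
    rw [hSdef, hTdef, ← Finset.union_sdiff_distrib]
    exact hcard
  obtain ⟨A, B, hAS, hBT, hAB, hAcard, hBcard⟩ := sel hScard hTcard hUcard
  set eA : Fin m → V := fun i => ((Finset.equivFinOfCardEq hAcard).symm i : V) with heA
  set eB : Fin n → V := fun j => ((Finset.equivFinOfCardEq hBcard).symm j : V) with heB
  have heAmem : ∀ i, eA i ∈ A := fun i => ((Finset.equivFinOfCardEq hAcard).symm i).2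
  have heBmem : ∀ j, eB j ∈ B := fun j => ((Finset.equivFinOfCardEq hBcard).symm j).2
  have heAinj : Function.Injective eA := fun i j h =>
    (Equiv.injective _) (Subtype.ext h)
  have heBinj : Function.Injective eB := fun i j h =>
    (Equiv.injective _) (Subtype.ext h)
  have hAprop : ∀ i, eA i ≠ u ∧ eA i ≠ v ∧ c s(u, eA i) = b := by
    intro i
    have := hAS (heAmem i)
    rw [hSdef, mem_sdiff, mem_nb] at this
    simp only [mem_insert, mem_singleton] at this
    exact ⟨fun h => this.2 (Or.inl h), fun h => this.2 (Or.inr h), this.1.2⟩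
  have hBprop : ∀ j, eB j ≠ u ∧ eB j ≠ v ∧ c s(v, eB j) = b := by
    intro j
    have := hBT (heBmem j)
    rw [hTdef, mem_sdiff, mem_nb] at this
    simp only [mem_insert, mem_singleton] at this
    exact ⟨fun h => this.2 (Or.inl h), fun h => this.2 (Or.inr h), this.1.2⟩
  have hABne : ∀ i j, eA i ≠ eB j := by
    intro i j h
    exact Finset.disjoint_left.mp hAB (heAmem i) (h ▸ heBmem j)
  set f : Fin 2 ⊕ Fin m ⊕ Fin n → V :=
    Sum.elim (fun i => if i = 0 then u else v) (Sum.elim eA eB) with hf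
  have hf0 : f (Sum.inl 0) = u := rfl
  have hf1 : f (Sum.inl 1) = v := rfl
  have hfl : ∀ i : Fin 2, f (Sum.inl i) = u ∨ f (Sum.inl i) = v := by
    intro i; fin_cases i
    · exact Or.inl rfl
    · exact Or.inr rfl
  refine ⟨f, ?_, ?_⟩
  · rintro (i | a | a) (j | a' | a') h <;> simp only [hf, Sum.elim_inl, Sum.elim_inr] at h
    · fin_cases i <;> fin_cases j <;> simp_all <;> exact absurd h hne <;> exact absurd h.symm hne
    · rcases hfl i with h' | h' <;> rw [hf] at h' <;> simp only [Sum.elim_inl] at h' <;>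
        rw [h'] at h
      · exact absurd h.symm (hAprop a').1
      · exact absurd h.symm (hAprop a').2.1
    · rcases hfl i with h' | h' <;> rw [hf] at h' <;> simp only [Sum.elim_inl] at h' <;>
        rw [h'] at h
      · exact absurd h.symm (hBprop a').1
      · exact absurd h.symm (hBprop a').2.1
    · rcases hfl j with h' | h' <;> rw [hf] at h' <;> simp only [Sum.elim_inl] at h' <;>
        rw [h'] at h
      · exact absurd h (hAprop a).1
      · exact absurd h (hAprop a).2.1
    · rw [heAinj h]
    · exact absurd h (hABne a a')
    · rcases hfl j with h' | h' <;> rw [hf] at h' <;> simp only [Sum.elim_inl] at h' <;>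
        rw [h'] at h
      · exact absurd h (hBprop a).1
      · exact absurd h (hBprop a).2.1
    · exact absurd h.symm (hABne a' a)
    · rw [heBinj h]
  · intro x y hadj
    rw [bistar, SimpleGraph.fromRel_adj] at hadj
    obtain ⟨hxy, hrel⟩ := hadj
    have key : ∀ p q : Fin 2 ⊕ Fin m ⊕ Fin n,
        ((p = Sum.inl 0 ∧ q = Sum.inl 1) ∨
         (p = Sum.inl 0 ∧ ∃ i, q = Sum.inr (Sum.inl i)) ∨
         (p = Sum.inl 1 ∧ ∃ j, q = Sum.inr (Sum.inr j))) →
        (colorGraph c b).Adj (f p) (f q) := by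
      rintro p q (⟨rfl, rfl⟩ | ⟨rfl, i, rfl⟩ | ⟨rfl, j, rfl⟩)
      · exact (colorGraph_adj c b u v).mpr ⟨hne, he⟩
      · exact (colorGraph_adj c b u (eA i)).mpr ⟨Ne.symm (hAprop i).1, (hAprop i).2.2⟩
      · exact (colorGraph_adj c b v (eB j)).mpr ⟨Ne.symm (hBprop j).2.1, (hBprop j).2.2⟩
    rcases hrel with h | h
    · exact key x y h
    · exact (key y x h).symm

lemma upper (m n : ℕ) (hm : 2 ≤ m) (hn : n = m ∨ n = m + 1)
    (hV : Fintype.card V = 2 * m + n + 2) (c : Sym2 V → Bool) :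
    HasMonoCopy (bistar m n) c := by
  classical
  by_contra hcon
  have hnc : ∀ b : Bool, ¬ ContainsCopy (bistar m n) (colorGraph c b) := by
    intro b hb; exact hcon ⟨b, hb⟩
  have hmn : m ≤ n := by omega
  have hN1 : ∀ (b : Bool) (u : V), deg c b u + deg c (!b) u = 2 * m + n + 1 := by
    intro b u
    have h := deg_add c b u
    rw [hV] at h
    omega
  have hN1' : ∀ (b : Bool) (u : V), deg c (!b) u = 2 * m + n + 1 - deg c b u := by
    intro b u; have := hN1 b u; omega
  -- blocking
  have block : ∀ (b : Bool) (u v : V), u ≠ v → c s(u, v) = b →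
      m + 1 ≤ deg c b u → n + 1 ≤ deg c b v →
      m + 1 ≤ (nb c (!b) u ∩ nb c (!b) v).card := by
    intro b u v hne he hu hv
    by_contra hlt
    push_neg at hlt
    have hpart := partition_lemma c b hne he
    rw [hV] at hpart
    apply hnc b
    exact copy_lemma m n c b hne he hu hv (by omega)
  -- step 1
  have sub1 : ∀ (b : Bool) (u : V), m + n + 1 ≤ deg c b u →
      ∀ w ∈ nb c b u, deg c b w ≤ m := by
    intro b u hdu w hw
    by_contra hgt
    push_neg at hgt
    rw [mem_nb] at hw
    have hbl := block b w u hw.1 (by rw [Sym2.eq_swap]; exact hw.2) hgt (by omega)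
    have hle : (nb c (!b) w ∩ nb c (!b) u).card ≤ deg c (!b) u :=
      Finset.card_le_card (Finset.inter_subset_right)
    have := hN1 b u
    omega
  have step1 : ∀ (b : Bool) (u : V), deg c b u ≤ m + n := by
    by_contra hex
    push_neg at hex
    obtain ⟨b, u, hdu⟩ := hex
    have hdu' : m + n + 1 ≤ deg c b u := hdu
    have hnbne : (nb c b u).Nonempty := by
      rw [← Finset.card_pos]; unfold deg at hdu'; omega
    obtain ⟨w, hw⟩ := hnbne
    have hwdeg : deg c b w ≤ m := sub1 b u hdu' w hw
    have hwdeg' : m + n + 1 ≤ deg c (!b) w := by have := hN1 b w; omega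
    have sub2 := sub1 (!b) w hwdeg'
    have hdisj : Disjoint (nb c b u) (nb c (!b) w) := by
      rw [Finset.disjoint_left]
      intro x hx1 hx2
      have h1 : deg c b x ≤ m := sub1 b u hdu' x hx1
      have h2 : deg c (!b) x ≤ m := sub2 x hx2
      have := hN1 b x
      omega
    have hcard := Finset.card_union_of_disjoint hdisj
    have hle : (nb c b u ∪ nb c (!b) w).card ≤ Fintype.card V :=
      le_trans (Finset.card_le_card (Finset.subset_univ _)) (le_of_eq Finset.card_univ)
    unfold deg at *
    rw [hV] at hle
    omega
  have step1' : ∀ (b : Bool) (u : V), m + 1 ≤ deg c b u := by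
    intro b u
    have h1 := hN1 b u
    have h2 := step1 (!b) u
    omega
  -- main case split
  by_cases hcase : ∃ u : V, n + 1 ≤ deg c true u ∧ n + 1 ≤ deg c false u
  · obtain ⟨u, hu1, hu2⟩ := hcase
    set A := nb c true u with hA
    set B := nb c false u with hB
    have hab : A.card + B.card = 2 * m + n + 1 := hN1 true u
    have hAbound : ∀ v ∈ A, m + 1 ≤ (B.filter (fun w => c s(v, w) = false)).card := by
      intro v hv
      rw [hA, mem_nb] at hv
      have hbl := block true v u hv.1 (by rw [Sym2.eq_swap]; exact hv.2) (step1' true v) hu1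
      refine le_trans hbl (Finset.card_le_card ?_)
      intro w hw
      rw [Finset.mem_inter, mem_nb, mem_nb] at hw
      rw [Finset.mem_filter]
      exact ⟨by rw [hB, mem_nb]; exact hw.2, hw.1.2⟩
    have hBbound : ∀ w ∈ B, m + 1 ≤ (A.filter (fun v => c s(w, v) = true)).card := by
      intro w hw
      rw [hB, mem_nb] at hw
      have hbl := block false w u hw.1 (by rw [Sym2.eq_swap]; exact hw.2) (step1' false w) hu2
      refine le_trans hbl (Finset.card_le_card ?_)
      intro v hv
      rw [Finset.mem_inter, mem_nb, mem_nb] at hv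
      rw [Finset.mem_filter]
      exact ⟨by rw [hA, mem_nb]; simp only [Bool.not_false] at hv; exact hv.2, by
        simp only [Bool.not_false] at hv; exact hv.1.2⟩
    -- double counting
    have hsum1 : (m + 1) * A.card ≤
        ∑ v ∈ A, (B.filter (fun w => c s(v, w) = false)).card := by
      rw [mul_comm]
      exact Finset.card_nsmul_le_sum A _ (m+1) hAbound
    have hsum2 : (m + 1) * B.card ≤
        ∑ w ∈ B, (A.filter (fun v => c s(w, v) = true)).card := by
      rw [mul_comm]
      exact Finset.card_nsmul_le_sum B _ (m+1) hBbound
    have hswap : ∑ w ∈ B, (A.filter (fun v => c s(w, v) = true)).card =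
        ∑ v ∈ A, (B.filter (fun w => c s(v, w) = true)).card := by
      simp only [Finset.card_filter]
      rw [Finset.sum_comm]
      congr 1
      ext v
      congr 1
      ext w
      rw [Sym2.eq_swap]
    have hcompl : ∀ v, (B.filter (fun w => c s(v, w) = false)).card +
        (B.filter (fun w => c s(v, w) = true)).card = B.card := by
      intro v
      have h := Finset.card_filter_add_card_filter_not
        (s := B) (p := fun w => c s(v, w) = false)
      rw [← h]
      congr 1
      apply congrArg
      apply Finset.filter_congr
      intro w _
      simp
    have htot : ∑ v ∈ A, (B.filter (fun w => c s(v, w) = false)).card +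
        ∑ v ∈ A, (B.filter (fun w => c s(v, w) = true)).card = A.card * B.card := by
      rw [← Finset.sum_add_distrib]
      rw [Finset.sum_congr rfl (fun v _ => hcompl v), Finset.sum_const, smul_eq_mul]
    have hkey : (m + 1) * (A.card + B.card) ≤ A.card * B.card := by
      rw [mul_add]
      calc (m+1) * A.card + (m+1) * B.card
          ≤ ∑ v ∈ A, (B.filter (fun w => c s(v, w) = false)).card +
            ∑ v ∈ A, (B.filter (fun w => c s(v, w) = true)).card := by
            rw [← hswap]; exact Nat.add_le_add hsum1 hsum2
        _ = A.card * B.card := htot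
    have hsq : 4 * (A.card * B.card) ≤ (A.card + B.card) ^ 2 := by
      nlinarith [two_mul_le_add_sq A.card B.card]
    rw [hab] at hkey hsq
    have hs : 0 < 2 * m + n + 1 := by omega
    have h4 : (4 * (m + 1)) * (2 * m + n + 1) ≤ (2 * m + n + 1) * (2 * m + n + 1) := by
      calc (4 * (m + 1)) * (2 * m + n + 1) = 4 * ((m + 1) * (2 * m + n + 1)) := by ring
        _ ≤ 4 * (A.card * B.card) := by omega
        _ ≤ (2 * m + n + 1) ^ 2 := hsq
        _ = (2 * m + n + 1) * (2 * m + n + 1) := by ring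
    have hfin := Nat.le_of_mul_le_mul_right h4 hs
    omega
  · push_neg at hcase
    have hne : Nonempty V := by
      rw [← Fintype.card_pos_iff]; omega
    obtain ⟨u⟩ := hne
    have hbex : ∃ b : Bool, deg c b u ≤ n := by
      rcases le_or_gt (deg c true u) n with h | h
      · exact ⟨true, h⟩
      · exact ⟨false, by have := hcase u h; omega⟩
    obtain ⟨b, hbu⟩ := hbex
    have hb1 : deg c b u = m + 1 := by
      have := step1' b u; omega
    have hnb1 : n + 1 ≤ deg c (!b) u := by
      have := hN1 b u; omega
    have key : ∀ w ∈ nb c (!b) u, nb c b u ⊆ nb c b w := by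
      intro w hw
      rw [mem_nb] at hw
      have hbl := block (!b) w u hw.1 (by rw [Sym2.eq_swap]; exact hw.2)
        (step1' (!b) w) hnb1
      rw [Bool.not_not] at hbl
      have hsub : nb c b w ∩ nb c b u ⊆ nb c b u := Finset.inter_subset_right
      have heq : nb c b w ∩ nb c b u = nb c b u := by
        apply Finset.eq_of_subset_of_card_le hsub
        have : (nb c b u).card = m + 1 := hb1
        omega
      rw [← heq]
      exact Finset.inter_subset_left
    have hxne : (nb c b u).Nonempty := by
      rw [← Finset.card_pos]; unfold deg at hb1; omega
    obtain ⟨x, hx⟩ := hxne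
    have hbig : insert u (nb c (!b) u) ⊆ nb c b x := by
      intro w hw
      rcases Finset.mem_insert.mp hw with rfl | hw'
      · exact nb_comm.mp hx
      · exact nb_comm.mp (key w hw' hx)
    have hcard : deg c (!b) u + 1 ≤ deg c b x := by
      have := Finset.card_le_card hbig
      rw [Finset.card_insert_of_notMem notMem_nb_self] at this
      unfold deg; omega
    have h1 := step1 b x
    have h2 := hN1 b u
    omega

def sideFun (k N : ℕ) (u : Fin N) : Bool := decide (u.val < k)

def lcol (m n : ℕ) : Sym2 (Fin (2 * m + n + 1)) → Bool :=
  Sym2.lift ⟨fun u v => sideFun (m + n + 1) _ u == sideFun (m + n + 1) _ v,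
    fun u v => by simp only []; cases h1 : sideFun (m+n+1) _ u <;> cases h2 : sideFun (m+n+1) _ v <;> rfl⟩

lemma lcol_eq (m n : ℕ) (u v : Fin (2 * m + n + 1)) :
    lcol m n s(u, v) = (sideFun (m + n + 1) _ u == sideFun (m + n + 1) _ v) :=
  Sym2.lift_mk _ u v

lemma card_side_true (m n : ℕ) :
    (Finset.univ.filter (fun w : Fin (2 * m + n + 1) =>
      sideFun (m + n + 1) _ w = true)).card ≤ m + n + 1 := by
  have := Finset.card_le_card_of_injOn
    (f := fun w : Fin (2 * m + n + 1) => (⟨w.val % (m + n + 1), Nat.mod_lt _ (by omega)⟩ : Fin (m + n + 1)))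
    (s := Finset.univ.filter (fun w : Fin (2 * m + n + 1) => sideFun (m + n + 1) _ w = true))
    (t := Finset.univ) (fun a _ => Finset.mem_univ _) ?_
  · simpa using this
  · intro a ha b hb hab
    simp only [Finset.mem_coe, Finset.mem_filter, sideFun, decide_eq_true_eq] at ha hb
    have : a.val % (m+n+1) = b.val % (m+n+1) := congrArg Fin.val hab
    rw [Nat.mod_eq_of_lt ha.2, Nat.mod_eq_of_lt hb.2] at this
    exact Fin.ext this

lemma card_side_false (m n : ℕ) (hm : 1 ≤ m) :
    (Finset.univ.filter (fun w : Fin (2 * m + n + 1) =>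
      sideFun (m + n + 1) _ w = false)).card ≤ m := by
  have := Finset.card_le_card_of_injOn
    (f := fun w : Fin (2 * m + n + 1) => (⟨(w.val - (m + n + 1)) % m, Nat.mod_lt _ (by omega)⟩ : Fin m))
    (s := Finset.univ.filter (fun w : Fin (2 * m + n + 1) => sideFun (m + n + 1) _ w = false))
    (t := Finset.univ) (fun a _ => Finset.mem_univ _) ?_
  · simpa using this
  · intro a ha b hb hab
    simp only [Finset.mem_coe, Finset.mem_filter, sideFun, decide_eq_false_iff_not, not_lt] at ha hb
    have h : (a.val - (m+n+1)) % m = (b.val - (m+n+1)) % m := congrArg Fin.val hab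
    have ha2 : a.val - (m+n+1) < m := by omega
    have hb2 : b.val - (m+n+1) < m := by omega
    rw [Nat.mod_eq_of_lt ha2, Nat.mod_eq_of_lt hb2] at h
    apply Fin.ext
    omega

lemma no_mono_lower (m n : ℕ) (hm : 1 ≤ m) (hmn : m ≤ n) :
    ¬ HasMonoCopy (bistar m n) (lcol m n) := by
  classical
  rintro ⟨b, f, hinj, hadj⟩
  set g : Fin (2 * m + n + 1) → Bool := sideFun (m + n + 1) _ with hg
  have hadj' : ∀ {x y : Fin 2 ⊕ Fin m ⊕ Fin n}, (bistar m n).Adj x y →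
      f x ≠ f y ∧ (g (f x) == g (f y)) = b := by
    intro x y h
    have := hadj h
    rw [colorGraph_adj] at this
    exact ⟨this.1, by rw [← lcol_eq]; exact this.2⟩
  have h01 : (bistar m n).Adj (Sum.inl 0) (Sum.inl 1) := by
    rw [bistar, SimpleGraph.fromRel_adj]
    exact ⟨by simp, Or.inl (Or.inl ⟨rfl, rfl⟩)⟩
  have h0i : ∀ i : Fin m, (bistar m n).Adj (Sum.inl 0) (Sum.inr (Sum.inl i)) := by
    intro i
    rw [bistar, SimpleGraph.fromRel_adj]
    exact ⟨by simp, Or.inl (Or.inr (Or.inl ⟨rfl, ⟨i, rfl⟩⟩))⟩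
  have h1j : ∀ j : Fin n, (bistar m n).Adj (Sum.inl 1) (Sum.inr (Sum.inr j)) := by
    intro j
    rw [bistar, SimpleGraph.fromRel_adj]
    exact ⟨by simp, Or.inl (Or.inr (Or.inr ⟨rfl, ⟨j, rfl⟩⟩))⟩
  cases b
  · -- cross edges: one of the centers is on the big (true) side
    have hne01 := (hadj' h01).1
    have hdiff : g (f (Sum.inl 0)) ≠ g (f (Sum.inl 1)) := by
      have := (hadj' h01).2
      cases h1 : g (f (Sum.inl 0)) <;> cases h2 : g (f (Sum.inl 1)) <;> simp_all
    -- which center is true?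
    rcases Bool.eq_false_or_eq_true (g (f (Sum.inl 0))) with h0 | h0
    · -- center 0 is true; its partners (center 1 and its m leaves) are all false
      set P : Finset (Fin (2 * m + n + 1)) :=
        insert (f (Sum.inl 1)) (Finset.univ.image (fun i : Fin m => f (Sum.inr (Sum.inl i)))) with hP
      have hPsub : P ⊆ Finset.univ.filter (fun w => g w = false) := by
        intro w hw
        rw [hP, Finset.mem_insert] at hw
        rw [Finset.mem_filter]
        refine ⟨Finset.mem_univ _, ?_⟩
        rcases hw with rfl | hw
        · cases h : g (f (Sum.inl 1))
          · rfl
          · exact absurd (h0.trans h.symm) hdiff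
        · obtain ⟨i, _, rfl⟩ := Finset.mem_image.mp hw
          have := (hadj' (h0i i)).2
          cases h : g (f (Sum.inr (Sum.inl i)))
          · rfl
          · rw [h0, h] at this; simp at this
      have hPcard : P.card = m + 1 := by
        rw [hP, Finset.card_insert_of_notMem, Finset.card_image_of_injective _
          (fun a b h => by have := hinj h; injection this with h2; injection h2)]
        · simp
        · intro hmem
          obtain ⟨i, _, hi⟩ := Finset.mem_image.mp hmem
          exact (by simp : Sum.inl 1 ≠ (Sum.inr (Sum.inl i) : Fin 2 ⊕ Fin m ⊕ Fin n)) (hinj hi.symm)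
      have := Finset.card_le_card hPsub
      have hfalse := card_side_false m n hm
      rw [← hg] at hfalse
      omega
    · -- then center 1 is true; its partners (center 0 and its n leaves) are all false
      have h1t : g (f (Sum.inl 1)) = true := by
        cases h : g (f (Sum.inl 1))
        · exact absurd (h0.trans h.symm) hdiff
        · rfl
      set P : Finset (Fin (2 * m + n + 1)) :=
        insert (f (Sum.inl 0)) (Finset.univ.image (fun j : Fin n => f (Sum.inr (Sum.inr j)))) with hP
      have hPsub : P ⊆ Finset.univ.filter (fun w => g w = false) := by
        intro w hw
        rw [hP, Finset.mem_insert] at hw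
        rw [Finset.mem_filter]
        refine ⟨Finset.mem_univ _, ?_⟩
        rcases hw with rfl | hw
        · exact h0
        · obtain ⟨j, _, rfl⟩ := Finset.mem_image.mp hw
          have := (hadj' (h1j j)).2
          cases h : g (f (Sum.inr (Sum.inr j)))
          · rfl
          · rw [h1t, h] at this; simp at this
      have hPcard : P.card = n + 1 := by
        rw [hP, Finset.card_insert_of_notMem, Finset.card_image_of_injective _
          (fun a b h => by have := hinj h; injection this with h2; injection h2)]
        · simp
        · intro hmem
          obtain ⟨j, _, hj⟩ := Finset.mem_image.mp hmem
          exact (by simp : Sum.inl 0 ≠ (Sum.inr (Sum.inr j) : Fin 2 ⊕ Fin m ⊕ Fin n)) (hinj hj.symm) 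
      have := Finset.card_le_card hPsub
      have hfalse := card_side_false m n hm
      rw [← hg] at hfalse
      omega
  · -- monochromatic side: all of the image is on one side
    have hsame : ∀ {x y : Fin 2 ⊕ Fin m ⊕ Fin n}, (bistar m n).Adj x y →
        g (f x) = g (f y) := by
      intro x y h
      have := (hadj' h).2
      cases h1 : g (f x) <;> cases h2 : g (f y) <;> simp_all
    set s := g (f (Sum.inl 0)) with hs
    have hall : ∀ z : Fin 2 ⊕ Fin m ⊕ Fin n, g (f z) = s := by
      rintro (i | i | j)
      · fin_cases i
        · rfl
        · exact (hsame h01).symm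
      · exact (hsame (h0i i)).symm
      · exact ((hsame h01).trans (hsame (h1j j))).symm
    set Y : Finset (Fin (2 * m + n + 1)) := Finset.univ.filter (fun w => g w = s) with hY
    have hsub : Finset.univ.image f ⊆ Y := by
      intro w hw
      obtain ⟨z, _, rfl⟩ := Finset.mem_image.mp hw
      rw [hY, Finset.mem_filter]
      exact ⟨Finset.mem_univ _, hall z⟩
    have himg : (Finset.univ.image f).card = m + n + 2 := by
      rw [Finset.card_image_of_injective _ hinj, Finset.card_univ]
      simp [Fintype.card_sum]
      ring
    have hYcard : Y.card ≤ m + n + 1 := by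
      rcases Bool.eq_false_or_eq_true s with h | h
      · rw [hY, h]
        have htrue := card_side_true m n
        rw [← hg] at htrue
        exact htrue
      · rw [hY, h]
        have hfalse := card_side_false m n hm
        rw [← hg] at hfalse
        omega
    have := Finset.card_le_card hsub
    omega

lemma not_forced_of_small (m n k : ℕ) (hm : 1 ≤ m) (hmn : m ≤ n)
    (hk : k ≤ 2 * m + n + 1) :
    ¬ (∀ c : Sym2 (Fin k) → Bool, HasMonoCopy (bistar m n) c) := by
  intro hall
  set e : Fin k → Fin (2 * m + n + 1) := Fin.castLE hk with he
  obtain ⟨b, f, hinj, hadj⟩ := hall (fun s => lcol m n (s.map e))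
  apply no_mono_lower m n hm hmn
  refine ⟨b, e ∘ f, (Fin.castLE_injective hk).comp hinj, ?_⟩
  intro x y h
  have := hadj h
  rw [colorGraph_adj] at this
  rw [Function.comp_apply, Function.comp_apply, colorGraph_adj]
  constructor
  · exact fun hc => this.1 ((Fin.castLE_injective hk) hc)
  · rw [← Sym2.map_pair_eq]
    exact this.2

end BistarAux

theorem bistar_ramsey_eq (m n : ℕ) (hm : 2 ≤ m) (hn : n = m ∨ n = m + 1) :
    ramseyNumber (bistar m n) = 2 * m + n + 2 := by
  have hmn : m ≤ n := by omega
  have hmem : (2 * m + n + 2) ∈ {r : ℕ | ∀ c : Sym2 (Fin r) → Bool, HasMonoCopy (bistar m n) c} := by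
    intro c
    exact BistarAux.upper m n hm hn (by simp) c
  unfold ramseyNumber
  apply le_antisymm
  · exact Nat.sInf_le hmem
  · apply le_csInf ⟨_, hmem⟩
    intro k hk
    by_contra hlt
    push_neg at hlt
    exact BistarAux.not_forced_of_small m n k (by omega) hmn (by omega) hk
end

section
/- Let G = S_n + e be a star S_n together with one extra edge joining two leaves (forming a triangle with a pendant star). Then r(S_n + e) ≥ 2n+1: the 2-coloring of K_{2n} with vertex set U ∪ W ∪ {v}, |U| = n, |W| = n-1, where edges within U, within W, and from v to W are blue, and edges from v to U and between U and W are red, contains no monochromatic copy of S_n + e. Consequently the star S_n is Ramsey saturated. -/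
open SimpleGraph

/-- The star `S n` with one extra edge between two of its leaves (leaves `1` and `2`). -/
def starPlusEdge (n : ℕ) : SimpleGraph (Fin (n + 1)) :=
  SimpleGraph.fromRel (fun u v => u = 0 ∨ (u = 1 ∧ v = 2))

/-!
Colour `K_{2n}` by the sides of a bipartition into two halves of size `n`: blue inside a half,
red across. A blue `S_n + e` would put its centre and its `n` leaves, `n + 1` vertices, into one
half; a red one would contain a red triangle, impossible as the red graph is bipartite. Hence
`r(S_n + e) > 2n ≥ r(S_n)`, the last bound by pigeonhole on the edges at one vertex of `K_{2n}`.

The bound `r(S_n + e) ≤ 2n + 3` makes the Ramsey number a genuine minimum: in `K_{2n+3}` a vertex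
has `n + 1` neighbours in one colour, which either span an edge of that colour, completing an
`S_n + e`, or form a clique of the other colour.
-/

open Finset

variable {V W : Type*}

lemma colorGraph_adj {c : Sym2 V → Bool} {b : Bool} {u v : V} :
    (colorGraph c b).Adj u v ↔ u ≠ v ∧ c s(u, v) = b := by
  simp [colorGraph, Sym2.eq_swap]

lemma colorGraph_not (c : Sym2 V → Bool) (b : Bool) :
    colorGraph c (!b) = (colorGraph c b)ᶜ := by
  ext u v
  cases b <;> simp [colorGraph_adj] <;> tauto

lemma colorGraph_comp_map {c : Sym2 W → Bool} {e : V → W} (he : Function.Injective e)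
    (b : Bool) :
    colorGraph (c ∘ Sym2.map e) b = (colorGraph c b).comap e := by
  ext u v
  simp [colorGraph_adj, he.ne_iff]

lemma containsCopy_iff_isContained {G : SimpleGraph V} {H : SimpleGraph W} :
    ContainsCopy G H ↔ G ⊑ H :=
  ⟨fun ⟨f, hf, hadj⟩ => ⟨⟨⟨f, @hadj⟩, hf⟩⟩,
    fun ⟨f⟩ => ⟨f, f.injective, fun _ _ => f.toHom.map_adj⟩⟩

lemma hasMonoCopy_iff {G : SimpleGraph V} {c : Sym2 W → Bool} :
    HasMonoCopy G c ↔ ∃ b, G ⊑ colorGraph c b := by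
  simp only [HasMonoCopy, containsCopy_iff_isContained]

lemma HasMonoCopy.of_comp_map {G : SimpleGraph V} {X : Type*} {c : Sym2 W → Bool} {e : X ↪ W}
    (h : HasMonoCopy G (c ∘ Sym2.map e)) : HasMonoCopy G c := by
  obtain ⟨b, hb⟩ := hasMonoCopy_iff.1 h
  rw [colorGraph_comp_map e.injective] at hb
  exact hasMonoCopy_iff.2 ⟨b, hb.trans (Embedding.comap e _).isContained⟩

lemma ramseyNumber_le {G : SimpleGraph V} {r : ℕ}
    (h : ∀ c : Sym2 (Fin r) → Bool, HasMonoCopy G c) : ramseyNumber G ≤ r :=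
  Nat.sInf_le h

-- Without `hG` the set defining `ramseyNumber G` may be empty, and then `sInf ∅ = 0`.
lemma lt_ramseyNumber {G : SimpleGraph V}
    (hG : ∃ r, ∀ c : Sym2 (Fin r) → Bool, HasMonoCopy G c)
    {m : ℕ} (c : Sym2 (Fin m) → Bool) (hc : ¬ HasMonoCopy G c) : m < ramseyNumber G := by
  by_contra! h
  exact hc (Nat.sInf_mem hG (c ∘ Sym2.map (Fin.castLEEmb h))).of_comp_map

lemma exists_monochromatic_neighbors [Fintype W] [DecidableEq W] (c : Sym2 W → Bool) (v : W) :
    ∃ b, ∃ s : Finset W, (∀ u ∈ s, (colorGraph c b).Adj v u) ∧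
      Fintype.card W ≤ 2 * #s + 1 := by
  let nbhd (b : Bool) : Finset W := {u ∈ univ.erase v | c s(v, u) = b}
  have hmem {b u} (hu : u ∈ nbhd b) : (colorGraph c b).Adj v u := by
    simp only [nbhd, mem_filter, mem_erase] at hu
    exact colorGraph_adj.2 ⟨hu.1.1.symm, hu.2⟩
  have hsplit : #(nbhd true) + #(nbhd false) + 1 = Fintype.card W := by
    simp only [nbhd, Bool.eq_false_iff, ne_eq]
    rw [card_filter_add_card_filter_not, card_erase_add_one (mem_univ v), card_univ]
  rcases le_total #(nbhd false) #(nbhd true) with h | h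
  · exact ⟨true, _, fun _ => hmem, by omega⟩
  · exact ⟨false, _, fun _ => hmem, by omega⟩

section Construction

variable {H : SimpleGraph V} {v : V} {n : ℕ}

lemma injective_cons_of_adj {g : Fin n → V} (hg : Function.Injective g)
    (hadj : ∀ i, H.Adj v (g i)) : Function.Injective (Fin.cons v g : Fin (n + 1) → V) :=
  Fin.cons_injective_iff.2 ⟨fun ⟨i, hi⟩ => H.irrefl (hi ▸ hadj i), hg⟩

lemma adj_cons_of_starGraph_adj {g : Fin n → V} (hadj : ∀ i, H.Adj v (g i)) {i j : Fin (n + 1)}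
    (hij : (_root_.starGraph n).Adj i j) :
    H.Adj ((Fin.cons v g : Fin (n + 1) → V) i) ((Fin.cons v g : Fin (n + 1) → V) j) := by
  obtain ⟨hne, rfl | rfl⟩ := (fromRel_adj ..).1 hij
  · obtain ⟨k, rfl⟩ := Fin.exists_succ_eq.2 hne.symm
    simpa using hadj k
  · obtain ⟨k, rfl⟩ := Fin.exists_succ_eq.2 hne
    simpa using (hadj k).symm

lemma starGraph_isContained_of_adj {s : Finset V} (hs : ∀ u ∈ s, H.Adj v u) (hn : n ≤ #s) :
    _root_.starGraph n ⊑ H := by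
  obtain ⟨e⟩ : Nonempty (Fin n ↪ s) := Function.Embedding.nonempty_of_card_le (by simpa)
  have hadj (i : Fin n) : H.Adj v (e i) := hs _ (e i).2
  have hinj : Function.Injective fun i => (e i : V) := Subtype.val_injective.comp e.injective
  exact ⟨⟨⟨Fin.cons v _, adj_cons_of_starGraph_adj hadj⟩,
    injective_cons_of_adj hinj hadj⟩⟩

lemma starPlusEdge_isContained_of_adj {m : ℕ} {s : Finset V} {x y : V}
    (hs : ∀ u ∈ s, H.Adj v u) (hx : x ∈ s) (hy : y ∈ s) (hxy : H.Adj x y)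
    (hm : m + 2 ≤ #s) :
    starPlusEdge (m + 2) ⊑ H := by
  classical
  obtain ⟨e⟩ : Nonempty (Fin m ↪ (s.erase x).erase y) := by
    refine Function.Embedding.nonempty_of_card_le ?_
    rw [Fintype.card_fin, Fintype.card_coe, card_erase_of_mem (mem_erase.2 ⟨hxy.ne.symm, hy⟩),
      card_erase_of_mem hx]
    omega
  set g : Fin (m + 2) → V := Fin.cons x (Fin.cons y fun i => (e i : V))
  have hg : Function.Injective g := by
    refine Fin.cons_injective_iff.2 ⟨?_, Fin.cons_injective_iff.2 ⟨?_, ?_⟩⟩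
    · rintro ⟨i, hi⟩
      induction i using Fin.cases with
      | zero => exact hxy.ne (by simpa using hi.symm)
      | succ k => exact (mem_erase.1 (mem_of_mem_erase (e k).2)).1 (by simpa using hi)
    · rintro ⟨i, hi⟩
      exact (mem_erase.1 (e i).2).1 hi
    · exact Subtype.val_injective.comp e.injective
  have hadj : ∀ i, H.Adj v (g i) :=
    Fin.cases (hs x hx) <| Fin.cases (hs y hy) fun i =>
      hs _ (mem_of_mem_erase (mem_of_mem_erase (e i).2))
  refine ⟨⟨⟨Fin.cons v g, fun {i j} hij => ?_⟩, injective_cons_of_adj hg hadj⟩⟩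
  obtain ⟨hne, (h | ⟨rfl, rfl⟩) | (h | ⟨rfl, rfl⟩)⟩ := (fromRel_adj ..).1 hij
  · exact adj_cons_of_starGraph_adj hadj ((fromRel_adj ..).2 ⟨hne, Or.inl h⟩)
  · exact hxy
  · exact adj_cons_of_starGraph_adj hadj ((fromRel_adj ..).2 ⟨hne, Or.inr h⟩)
  · exact hxy.symm

end Construction

lemma isContained_of_isClique {X : Type*} [Fintype X] (G : SimpleGraph X) {H : SimpleGraph W}
    {s : Finset W} (hs : H.IsClique (s : Set W)) (hcard : Fintype.card X ≤ #s) : G ⊑ H := by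
  obtain ⟨e⟩ : Nonempty (X ↪ s) := Function.Embedding.nonempty_of_card_le (by simpa)
  have hinj : Function.Injective fun x => (e x : W) := Subtype.val_injective.comp e.injective
  exact ⟨⟨⟨fun x => e x, fun hxy => hs (e _).2 (e _).2 (hinj.ne hxy.ne)⟩, hinj⟩⟩

section UpperBounds

variable [Fintype W] [DecidableEq W] [Nonempty W] (c : Sym2 W → Bool) {n : ℕ}

lemma hasMonoCopy_starGraph (hW : 2 * n ≤ Fintype.card W) :
    HasMonoCopy (_root_.starGraph n) c := by
  obtain ⟨v⟩ := ‹Nonempty W›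
  obtain ⟨b, s, hs, hcard⟩ := exists_monochromatic_neighbors c v
  exact hasMonoCopy_iff.2 ⟨b, starGraph_isContained_of_adj hs (by omega)⟩

lemma hasMonoCopy_starPlusEdge (hn : 2 ≤ n) (hW : 2 * n + 3 ≤ Fintype.card W) :
    HasMonoCopy (starPlusEdge n) c := by
  obtain ⟨m, rfl⟩ := Nat.exists_eq_add_of_le' hn
  obtain ⟨v⟩ := ‹Nonempty W›
  obtain ⟨b, s, hs, hcard⟩ := exists_monochromatic_neighbors c v
  rw [hasMonoCopy_iff]
  by_cases hedge : ∃ x ∈ s, ∃ y ∈ s, (colorGraph c b).Adj x y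
  · obtain ⟨x, hx, y, hy, hxy⟩ := hedge
    exact ⟨b, starPlusEdge_isContained_of_adj hs hx hy hxy (by omega)⟩
  · push Not at hedge
    have hclique : (colorGraph c !b).IsClique (s : Set W) := by
      rw [colorGraph_not]
      exact fun x hx y hy hne => ⟨hne, hedge x hx y hy⟩
    exact ⟨!b, isContained_of_isClique _ hclique (by rw [Fintype.card_fin]; omega)⟩

end UpperBounds

lemma starGraph_le_starPlusEdge (n : ℕ) : _root_.starGraph n ≤ starPlusEdge n := by
  intro i j h
  simp only [_root_.starGraph, starPlusEdge, fromRel_adj] at h ⊢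
  tauto

lemma not_cliqueFree_three_starPlusEdge {n : ℕ} (hn : 2 ≤ n) :
    ¬ (starPlusEdge n).CliqueFree 3 := by
  obtain ⟨m, rfl⟩ := Nat.exists_eq_add_of_le' hn
  refine IsNClique.not_cliqueFree (s := {0, 1, 2}) (is3Clique_triple_iff.2 ?_)
  simp only [starPlusEdge, fromRel_adj]
  refine ⟨⟨?_, by simp⟩, ⟨?_, by simp⟩, ⟨?_, by simp⟩⟩ <;>
    simp [Fin.ext_iff, Nat.mod_eq_of_lt (show 2 < m + 2 + 1 by omega)]

def sideColoring (p : W → Prop) [DecidablePred p] : Sym2 W → Bool :=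
  Sym2.lift ⟨fun u v => decide (p u ↔ p v), fun _ _ => by simp only [Iff.comm]⟩

lemma sideColoring_eq_true_iff {p : W → Prop} [DecidablePred p] {u v : W} :
    sideColoring p s(u, v) = true ↔ (p u ↔ p v) := by
  simp [sideColoring]

section SideColoring

variable {p : W → Prop} [DecidablePred p] {c : Sym2 W → Bool} {n : ℕ}

lemma not_starGraph_isContained_colorGraph_true [Fintype W]
    (hc : ∀ u v, u ≠ v → (c s(u, v) = true ↔ (p u ↔ p v)))
    (hpos : #{u | p u} ≤ n) (hneg : #{u | ¬ p u} ≤ n) :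
    ¬ _root_.starGraph n ⊑ colorGraph c true := by
  rintro ⟨f⟩
  have hside (i : Fin (n + 1)) : p (f i) ↔ p (f 0) := by
    obtain rfl | hi := eq_or_ne i 0
    · rfl
    have hadj := colorGraph_adj.1 (f.toHom.map_adj ((fromRel_adj ..).2 ⟨hi.symm, Or.inl rfl⟩))
    exact ((hc _ _ hadj.1).1 hadj.2).symm
  have hcard := card_le_card_of_injOn f (s := univ) (t := {u | p u ↔ p (f 0)})
    (fun i _ => mem_filter.2 ⟨mem_univ _, hside i⟩) f.injective.injOn
  by_cases h : p (f 0) <;> simp [h] at hcard <;> omega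

lemma colorable_two_colorGraph_false
    (hc : ∀ u v, u ≠ v → (c s(u, v) = true ↔ (p u ↔ p v))) :
    (colorGraph c false).Colorable 2 := by
  refine Fintype.card_bool ▸ (Coloring.mk (fun u => decide (p u)) fun {u v} h => ?_).colorable
  obtain ⟨huv, hfalse⟩ := colorGraph_adj.1 h
  simpa [hfalse] using hc u v huv

lemma not_hasMonoCopy_starPlusEdge_of_sides [Fintype W]
    (hc : ∀ u v, u ≠ v → (c s(u, v) = true ↔ (p u ↔ p v))) (hn : 2 ≤ n)
    (hpos : #{u | p u} ≤ n) (hneg : #{u | ¬ p u} ≤ n) : ¬ HasMonoCopy (starPlusEdge n) c := by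
  rintro ⟨_ | _, h⟩ <;> rw [containsCopy_iff_isContained] at h
  · exact not_cliqueFree_three_starPlusEdge hn
      (((colorable_two_colorGraph_false hc).cliqueFree (by norm_num)).comap h)
  · exact not_starGraph_isContained_colorGraph_true hc hpos hneg
      (h.mono_left (starGraph_le_starPlusEdge n))

end SideColoring

theorem starPlusEdge_ramsey_lower (n : ℕ) (hn : 2 ≤ n) :
    (∀ c : Sym2 (Fin (2 * n)) → Bool,
      (∀ u v : Fin (2 * n), u ≠ v →
        (c s(u, v) = true ↔ (((u : ℕ) < n) ↔ ((v : ℕ) < n)))) →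
      ¬ HasMonoCopy (starPlusEdge n) c) ∧
    2 * n + 1 ≤ ramseyNumber (starPlusEdge n) ∧
    ramseyNumber (_root_.starGraph n) < ramseyNumber (starPlusEdge n) := by
  have hlow : #{u : Fin (2 * n) | (u : ℕ) < n} = n := by
    rw [Fin.card_filter_val_lt]; omega
  have hhigh : #{u : Fin (2 * n) | ¬ (u : ℕ) < n} = n := by
    have := card_filter_add_card_filter_not (s := univ) (p := fun u : Fin (2 * n) => (u : ℕ) < n)
    rw [card_univ, Fintype.card_fin] at this
    omega
  have hsides (c : Sym2 (Fin (2 * n)) → Bool)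
      (hc : ∀ u v : Fin (2 * n), u ≠ v →
        (c s(u, v) = true ↔ (((u : ℕ) < n) ↔ ((v : ℕ) < n)))) :
      ¬ HasMonoCopy (starPlusEdge n) c :=
    not_hasMonoCopy_starPlusEdge_of_sides (p := fun u : Fin (2 * n) => (u : ℕ) < n) hc hn
      hlow.le hhigh.le
  have : Nonempty (Fin (2 * n)) := ⟨⟨0, by omega⟩⟩
  have hstar : ramseyNumber (_root_.starGraph n) ≤ 2 * n :=
    ramseyNumber_le fun c => hasMonoCopy_starGraph c (by simp)
  have hplus : 2 * n < ramseyNumber (starPlusEdge n) :=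
    lt_ramseyNumber ⟨2 * n + 3, fun c => hasMonoCopy_starPlusEdge c hn (by simp)⟩ _
      (hsides (sideColoring _) fun _ _ _ => sideColoring_eq_true_iff)
  exact ⟨hsides, hplus, by omega⟩
end
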